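/- arXiv:1909.11235 — 2 statements merged into one kernel-verified Lean document; each statement's English description precedes it below -/
import Mathlib

section
/- Let x be a point in n-dimensional Euclidean space, L > 0, and let y be a point on the sphere S(x,L) of radius L centered at x. Let N = {e_1,...,e_n} be an orthonormal basis. If 0 < l < 2L/√n, then at least one of the 2n points {y ± l·e_k : k = 1,...,n} lies in the open ball B(x,L). -/
/-!
The squared coordinates `⟪e_k, y - x⟫²` sum to `L²`, so one of them has `|⟪e_k, y - x⟫| ≥ L / √n`.
Moving `y` by `l` along `e_k` against the sign of that coordinate changes the squared distance
to `x` by `l² - 2 l |⟪e_k, y - x⟫| < 0` as soon as `l < 2L / √n`.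
-/

open scoped RealInnerProductSpace

namespace OrthonormalBasis

variable {ι E : Type*} [Fintype ι] [Nonempty ι] [NormedAddCommGroup E] [InnerProductSpace ℝ E]

theorem exists_norm_le_sqrt_card_mul_abs_inner (b : OrthonormalBasis ι ℝ E) (v : E) :
    ∃ i, ‖v‖ ≤ √(Fintype.card ι) * |⟪b i, v⟫| := by
  obtain ⟨i, hi⟩ := exists_eq_ciSup_of_finite (f := fun j ↦ ‖⟪b j, v⟫‖)
  refine ⟨i, ?_⟩
  rw [← Real.norm_eq_abs, hi]
  exact b.norm_le_card_mul_iSup_norm_inner v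

end OrthonormalBasis

section UnitVector

variable {E : Type*} [NormedAddCommGroup E] [InnerProductSpace ℝ E]

theorem norm_add_smul_unit_sq {e : E} (he : ‖e‖ = 1) (v : E) (t : ℝ) :
    ‖v + t • e‖ ^ 2 = ‖v‖ ^ 2 + 2 * t * ⟪e, v⟫ + t ^ 2 := by
  rw [norm_add_sq_real, real_inner_smul_right, real_inner_comm, norm_smul, he, mul_one,
    Real.norm_eq_abs, sq_abs]
  ring

theorem exists_sign_norm_add_smul_lt {e : E} (he : ‖e‖ = 1) (v : E) {l : ℝ} (hl : 0 < l)
    (hlt : l < 2 * |⟪e, v⟫|) :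
    ∃ s : ℝ, (s = 1 ∨ s = -1) ∧ ‖v + (s * l) • e‖ < ‖v‖ := by
  obtain ⟨s, hs, hsc⟩ : ∃ s : ℝ, (s = 1 ∨ s = -1) ∧ s * ⟪e, v⟫ = -|⟪e, v⟫| := by
    rcases le_or_gt 0 ⟪e, v⟫ with hc | hc
    · exact ⟨-1, Or.inr rfl, by rw [abs_of_nonneg hc]; ring⟩
    · exact ⟨1, Or.inl rfl, by rw [abs_of_neg hc]; ring⟩
  refine ⟨s, hs, pow_lt_pow_iff_left₀ (norm_nonneg _) (norm_nonneg _) two_ne_zero |>.mp ?_⟩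
  have hs2 : s ^ 2 = 1 := by rcases hs with rfl | rfl <;> norm_num
  calc ‖v + (s * l) • e‖ ^ 2 = ‖v‖ ^ 2 - l * (2 * |⟪e, v⟫| - l) := by
        rw [norm_add_smul_unit_sq he, mul_pow, hs2]
        linear_combination 2 * l * hsc
    _ < ‖v‖ ^ 2 := by nlinarith

end UnitVector

theorem stmt_0_general (n : ℕ) (L l : ℝ)
    (x y : EuclideanSpace ℝ (Fin n))
    (N : OrthonormalBasis (Fin n) ℝ (EuclideanSpace ℝ (Fin n)))
    (hy : ‖y - x‖ = L)
    (hl : 0 < l) (hl' : l < 2 * L / Real.sqrt n) :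
    ∃ k : Fin n, ∃ s : ℝ, (s = 1 ∨ s = -1) ∧ ‖(y + (s * l) • N k) - x‖ < L := by
  have hn : 0 < n := Nat.pos_of_ne_zero fun h ↦ by simp [h] at hl'; linarith
  have : Nonempty (Fin n) := ⟨⟨0, hn⟩⟩
  have hsqrt : 0 < √(n : ℝ) := Real.sqrt_pos.mpr (Nat.cast_pos.mpr hn)
  obtain ⟨k, hk⟩ := N.exists_norm_le_sqrt_card_mul_abs_inner (y - x)
  rw [Fintype.card_fin, hy] at hk
  have hlk : l < 2 * |⟪N k, y - x⟫| := by
    rw [mul_div_assoc] at hl'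
    calc l < 2 * (L / √n) := hl'
      _ ≤ 2 * |⟪N k, y - x⟫| := by gcongr; rwa [div_le_iff₀' hsqrt]
  obtain ⟨s, hs, hlt⟩ := exists_sign_norm_add_smul_lt (N.orthonormal.1 k) (y - x) hl hlk
  exact ⟨k, s, hs, by rwa [add_sub_right_comm, ← hy]⟩

/-- if `y` is on the sphere `S(x,L)` in `ℝⁿ`, `N` an orthonormal basis, and
`0 < l < 2L/√n`, then one of the `2n` points `y ± l • e_k` lies in the open ball `B(x,L)`. -/
theorem stmt_0 (n : ℕ) (L l : ℝ) (hL : 0 < L)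
    (x y : EuclideanSpace ℝ (Fin n))
    (N : OrthonormalBasis (Fin n) ℝ (EuclideanSpace ℝ (Fin n)))
    (hy : ‖y - x‖ = L)
    (hl : 0 < l) (hl' : l < 2 * L / Real.sqrt n) :
    ∃ k : Fin n, ∃ s : ℝ, (s = 1 ∨ s = -1) ∧ ‖(y + (s * l) • N k) - x‖ < L :=
  stmt_0_general n L l x y N hy hl hl'
end

section
/- Let Ω be a compact metric space, O_∞ an open subset, and suppose a sequence of stopping points x_k ∈ Ω \ O_k (with O_k nondecreasing open subsets of O_∞) satisfies: there exist 0 < q < R such that for every k, dist(x_k, O_k) ≤ q, and for every j > k, the path/graph at step j avoids the previously known constraint set B̄(x_k, R) ∩ O_∞ but the j-th path intersects B̄(x_k, R) ∩ O_∞ whenever ‖x_j − x_k‖ < R − q. Then the sequence (x_k) has no cluster point with infinitely many terms within distance ε < R − q of each other; hence the sequence is finite. -/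
open Set Metric

/-- abstract form of the finite-termination argument (Theorem 2 of the paper).
In a compact set `Ω`, an infinite sequence of stopping points `x k`, each within distance
`q < R` of a blocking obstacle not yet known at step `k`, where everything of the full
obstacle set `Oinf` within the detection ball `B̄(x k, R)` becomes known at step `k+1`,
is impossible. -/
theorem stmt_9 {X : Type*} [MetricSpace X]
    (Ω : Set X) (hΩ : IsCompact Ω)
    (Oinf : Set X) (hOinf : IsOpen Oinf)
    (O : ℕ → Set X) (hOopen : ∀ k, IsOpen (O k)) (hmono : Monotone O)
    (hsub : ∀ k, O k ⊆ Oinf)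
    (x : ℕ → X) (hxΩ : ∀ k, x k ∈ Ω) (hxfeas : ∀ k, x k ∉ O k)
    (q R : ℝ) (hq : 0 < q) (hqR : q < R)
    -- each stopping point is within distance q of a blocking obstacle point that was
    -- not yet part of the known environment at step k
    (hblock : ∀ k, ∃ o ∈ Oinf \ O k, dist (x k) o ≤ q)
    -- everything of Oinf within the detection radius R of x k is known from step k+1 on
    (hdetect : ∀ k, closedBall (x k) R ∩ Oinf ⊆ O (k + 1)) :
    False := by
  obtain ⟨a, -, φ, hφ, hconv⟩ := hΩ.tendsto_subseq hxΩ
  have hε : 0 < (R - q) / 2 := by linarith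
  rw [Metric.tendsto_atTop] at hconv
  obtain ⟨N, hN⟩ := hconv ((R - q) / 2) hε
  set k := φ N with hk
  set j := φ (N + 1) with hj
  have hkj : k < j := hφ (Nat.lt_succ_self N)
  have hd : dist (x j) (x k) < R - q := by
    have h1 := hN N le_rfl
    have h2 := hN (N + 1) (Nat.le_succ N)
    simp only [Function.comp_apply, ← hk, ← hj] at h1 h2
    calc dist (x j) (x k) ≤ dist (x j) a + dist (x k) a := dist_triangle_right _ _ _
    _ < (R - q) / 2 + (R - q) / 2 := by linarith
    _ = R - q := by ring
  obtain ⟨o, ⟨hoinf, honot⟩, hdo⟩ := hblock j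
  have hdko : dist (x k) o ≤ dist (x k) (x j) + dist (x j) o := dist_triangle _ _ _
  have hoin : o ∈ closedBall (x k) R ∩ Oinf := by
    refine ⟨Metric.mem_closedBall.mpr ?_, hoinf⟩
    rw [dist_comm (x j) (x k)] at hd
    rw [dist_comm]
    linarith
  exact honot (hmono (Nat.succ_le_of_lt hkj) (hdetect k hoin))
end
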